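/- arXiv:1903.09031 — 5 statements merged into one kernel-verified Lean document; each statement's English description precedes it below -/
import Mathlib

section
/- For every complex number z with Re z > 0, Re(δ(e^{−z})) ≥ (1/2)·min{1, Re z}, where δ(ζ) = 2(1−ζ)/(1+ζ). -/
/-!
Writing `r = ‖ζ‖`, one has `Re δ(ζ) = 2(1 - r²)/|1 + ζ|²`, and `|1 + ζ| ≤ 1 + r` gives
`Re δ(ζ) ≥ 2(1 - r)/(1 + r) ≥ 1 - r` when `r < 1`. For `ζ = e^{-z}` we have `r = e^{-Re z}`,
and `1 - e^{-x} ≥ min(1, x)/2` for `x ≥ 0` by `e^x ≥ 1 + x`.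
-/

/-- The characteristic (transfer) function of the trapezoidal rule. -/
noncomputable def trDelta (ζ : ℂ) : ℂ := 2 * (1 - ζ) / (1 + ζ)

open Complex in
theorem trDelta_re (ζ : ℂ) : (trDelta ζ).re = 2 * (1 - ‖ζ‖ ^ 2) / ‖1 + ζ‖ ^ 2 := by
  rw [trDelta, div_re, ← normSq_eq_norm_sq, ← normSq_eq_norm_sq, normSq_apply, normSq_apply]
  simp only [mul_re, mul_im, sub_re, sub_im, add_re, add_im, one_re, one_im, re_ofNat, im_ofNat]
  ring

theorem one_sub_norm_le_trDelta_re {ζ : ℂ} (hζ : ‖ζ‖ < 1) : 1 - ‖ζ‖ ≤ (trDelta ζ).re := by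
  have hpos : 0 < ‖1 + ζ‖ := by
    have := norm_sub_norm_le (1 : ℂ) (-ζ)
    rw [norm_one, norm_neg, sub_neg_eq_add] at this
    linarith
  calc 1 - ‖ζ‖ ≤ 2 * (1 - ‖ζ‖) / (1 + ‖ζ‖) := by
        rw [le_div_iff₀ (by positivity)]
        nlinarith [norm_nonneg ζ]
    _ = 2 * (1 - ‖ζ‖ ^ 2) / (1 + ‖ζ‖) ^ 2 := by
        field_simp; ring
    _ ≤ 2 * (1 - ‖ζ‖ ^ 2) / ‖1 + ζ‖ ^ 2 := by
        gcongr
        · nlinarith [norm_nonneg ζ]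
        · simpa using norm_add_le (1 : ℂ) ζ
    _ = (trDelta ζ).re := (trDelta_re ζ).symm

theorem half_min_one_le_one_sub_exp_neg {x : ℝ} (hx : 0 ≤ x) :
    1 / 2 * min 1 x ≤ 1 - Real.exp (-x) := by
  rcases le_total 1 x with h | h
  · rw [min_eq_left h]
    have hmono : Real.exp (-x) ≤ Real.exp (-1) := Real.exp_le_exp.mpr (by linarith)
    have hexp : Real.exp (-1) ≤ 1 / 2 := by
      rw [Real.exp_neg, inv_le_comm₀ (Real.exp_pos 1) (by norm_num)]
      linarith [Real.add_one_le_exp 1]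
    linarith
  · rw [min_eq_right h]
    have hexp : Real.exp (-x) ≤ 1 / (1 + x) := by
      rw [Real.exp_neg, inv_eq_one_div]
      exact one_div_le_one_div_of_le (by linarith) (by linarith [Real.add_one_le_exp x])
    have hquad : 1 / (1 + x) ≤ 1 - x / 2 := by
      rw [div_le_iff₀ (by linarith)]
      nlinarith
    linarith

theorem re_delta_exp_neg_ge (z : ℂ) (hz : 0 < z.re) :
    (trDelta (Complex.exp (-z))).re ≥ (1 / 2) * min 1 z.re := by
  have hnorm : ‖Complex.exp (-z)‖ = Real.exp (-z.re) := by
    rw [Complex.norm_exp, Complex.neg_re]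
  have hlt : ‖Complex.exp (-z)‖ < 1 := by
    rw [hnorm, Real.exp_lt_one_iff]
    linarith
  calc (1 / 2) * min 1 z.re ≤ 1 - Real.exp (-z.re) := half_min_one_le_one_sub_exp_neg hz.le
    _ = 1 - ‖Complex.exp (-z)‖ := by rw [hnorm]
    _ ≤ (trDelta (Complex.exp (-z))).re := one_sub_norm_le_trDelta_re hlt
end

section
/- For every complex number z with Re z > 0, |δ(e^{−z})| ≤ 8/min{1, Re z}, where δ(ζ) = 2(1−ζ)/(1+ζ). -/
/-!
Put `ζ = e^{-z}`, so `‖ζ‖ = e^{-r}` with `r = Re z > 0`. The triangle inequality gives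
`‖δ(ζ)‖ ≤ 2(1 + ‖ζ‖)/(1 - ‖ζ‖) ≤ 4/(1 - e^{-r})`, and `e^{-r} ≤ 1/(1 + r)` gives
`1 - e^{-r} ≥ r/(1 + r) ≥ min 1 r / 2`.
-/

lemma norm_trDelta_le {ζ : ℂ} (hζ : ‖ζ‖ < 1) :
    ‖trDelta ζ‖ ≤ 2 * (1 + ‖ζ‖) / (1 - ‖ζ‖) := by
  have hden : 1 - ‖ζ‖ ≤ ‖1 + ζ‖ := by
    simpa using norm_sub_norm_le (1 : ℂ) (-ζ)
  have hnum : ‖2 * (1 - ζ)‖ ≤ 2 * (1 + ‖ζ‖) := by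
    rw [norm_mul, Complex.norm_two]
    gcongr
    simpa using norm_sub_le (1 : ℂ) ζ
  rw [trDelta, norm_div]
  gcongr

lemma Real.div_one_add_le_one_sub_exp_neg {r : ℝ} (hr : 0 ≤ r) :
    r / (1 + r) ≤ 1 - Real.exp (-r) := by
  have hexp : Real.exp (-r) ≤ (1 + r)⁻¹ := by
    rw [Real.exp_neg]
    gcongr
    linarith [Real.add_one_le_exp r]
  have hsplit : r / (1 + r) = 1 - (1 + r)⁻¹ := by
    field_simp
    ring
  linarith

lemma min_one_le_two_mul_div_one_add {r : ℝ} (hr : 0 ≤ r) :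
    min 1 r ≤ 2 * (r / (1 + r)) := by
  rw [mul_div_assoc', le_div_iff₀ (by linarith)]
  rcases le_total r 1 with h | h
  · rw [min_eq_right h]; nlinarith
  · rw [min_eq_left h]; linarith

theorem abs_delta_exp_neg_le (z : ℂ) (hz : 0 < z.re) :
    ‖trDelta (Complex.exp (-z))‖ ≤ 8 / min 1 z.re := by
  have hnorm : ‖Complex.exp (-z)‖ = Real.exp (-z.re) := by
    rw [Complex.norm_exp, Complex.neg_re]
  have hlt : Real.exp (-z.re) < 1 := Real.exp_lt_one_iff.2 (neg_lt_zero.2 hz)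
  have hmin : 0 < min 1 z.re := lt_min one_pos hz
  have hgap : min 1 z.re / 2 ≤ 1 - Real.exp (-z.re) := by
    linarith [min_one_le_two_mul_div_one_add hz.le,
      Real.div_one_add_le_one_sub_exp_neg hz.le]
  calc ‖trDelta (Complex.exp (-z))‖
      ≤ 2 * (1 + Real.exp (-z.re)) / (1 - Real.exp (-z.re)) := by
        rw [← hnorm]
        exact norm_trDelta_le (hnorm ▸ hlt)
    _ ≤ 4 / (min 1 z.re / 2) := by gcongr; linarith
    _ = 8 / min 1 z.re := by field_simp; norm_num
end

section
/- Let D: [0, π) → ℝ be defined by D(σ) = Σ_{ℓ≥0} α_ℓ σ^{2ℓ}, where α_ℓ = |a_ℓ|/2^{2ℓ+2} and Σ a_ℓ ω^{2ℓ} is the power series of (tanh ω − ω)/ω³ at 0. Then for every complex z with 0 < |z| < π, |δ(e^{−z}) − z| ≤ D(|z|)·|z|³, where δ(ζ) = 2(1−ζ)/(1+ζ). -/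
/-! With `w = z / 2` one has `δ(e^{-z}) = 2 tanh w`, so `δ(e^{-z}) - z = 2 (tanh w - w)
= 2 w³ ∑ aₗ w^{2ℓ}`; bounding this series termwise by the norms of its terms gives exactly
`4 D(|z|)`, since `|w|^{2ℓ} = |z|^{2ℓ} / 2^{2ℓ}`. -/

open Complex

/- Where `cosh w = 0` both sides are `0`, as divisions by zero. -/
theorem trDelta_exp_neg_two_mul (w : ℂ) : trDelta (exp (-(2 * w))) = 2 * tanh w := by
  have hexp : exp (-(2 * w)) = exp (-w) * exp (-w) := by rw [← exp_add]; ring_nf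
  have hnum : 1 - exp (-(2 * w)) = exp (-w) * (2 * sinh w) := by
    rw [hexp, sinh, exp_neg]; field_simp
  have hden : 1 + exp (-(2 * w)) = exp (-w) * (2 * cosh w) := by
    rw [hexp, cosh, exp_neg]; field_simp
  rw [trDelta, hnum, hden, mul_div_assoc, mul_div_mul_left _ _ (exp_ne_zero _),
    mul_div_mul_left _ _ two_ne_zero, tanh_eq_sinh_div_cosh]

theorem abs_delta_sub_le_majorant
    (a : ℕ → ℂ)
    (ha : ∀ ω : ℂ, ‖ω‖ < Real.pi / 2 → ω ≠ 0 →
      (Complex.tanh ω - ω) / ω ^ 3 = ∑' ℓ : ℕ, a ℓ * ω ^ (2 * ℓ))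
    (hsum : ∀ σ : ℝ, 0 ≤ σ → σ < Real.pi →
      Summable fun ℓ : ℕ => ‖a ℓ‖ / 2 ^ (2 * ℓ + 2) * σ ^ (2 * ℓ))
    (D : ℝ → ℝ)
    (hD : ∀ σ : ℝ, D σ = ∑' ℓ : ℕ, ‖a ℓ‖ / 2 ^ (2 * ℓ + 2) * σ ^ (2 * ℓ)) :
    ∀ z : ℂ, 0 < ‖z‖ → ‖z‖ < Real.pi →
      ‖trDelta (Complex.exp (-z)) - z‖
        ≤ D (‖z‖) * ‖z‖ ^ 3 := by
  intro z hz0 hzπ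
  set w := z / 2
  have hz : z = 2 * w := by ring
  have hw0 : w ≠ 0 := div_ne_zero (norm_pos_iff.mp hz0) two_ne_zero
  have hwz : ‖z‖ = 2 * ‖w‖ := by rw [hz, norm_mul, RCLike.norm_two]
  have hseries : trDelta (exp (-z)) - z = 2 * w ^ 3 * ∑' ℓ, a ℓ * w ^ (2 * ℓ) := by
    rw [← ha w (by linarith) hw0, hz, trDelta_exp_neg_two_mul]
    field_simp
  have hterm : ∀ ℓ : ℕ, ‖a ℓ‖ / 2 ^ (2 * ℓ + 2) * ‖z‖ ^ (2 * ℓ) = ‖a ℓ * w ^ (2 * ℓ)‖ / 4 := by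
    intro ℓ
    rw [norm_mul, norm_pow, hwz, mul_pow, pow_add]
    field_simp
    ring
  have hnorm_summable : Summable fun ℓ => ‖a ℓ * w ^ (2 * ℓ)‖ := by
    refine ((hsum ‖z‖ hz0.le hzπ).mul_left 4).congr fun ℓ => ?_
    rw [hterm]; ring
  calc ‖trDelta (exp (-z)) - z‖
      = 2 * ‖w‖ ^ 3 * ‖∑' ℓ, a ℓ * w ^ (2 * ℓ)‖ := by
        rw [hseries, norm_mul, norm_mul, norm_pow, RCLike.norm_two]
    _ ≤ 2 * ‖w‖ ^ 3 * ∑' ℓ, ‖a ℓ * w ^ (2 * ℓ)‖ := by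
        gcongr; exact norm_tsum_le_tsum_norm hnorm_summable
    _ = D ‖z‖ * ‖z‖ ^ 3 := by
        rw [hD, tsum_congr hterm, tsum_div_const, hwz]; ring
end

section
/- With D as above and E_m(σ) := max{D(σ)^j : j = 1, …, m} · ((1+σ²)^m − 1)/σ², for every integer m ≥ 1 and every complex z with Re z > 0 and |z| < π, one has |δ(e^{−z})^m − z^m| ≤ E_m(|z|)·|z|^{m+2}. -/
open Complex in
theorem trDelta_exp_neg_eq_two_mul_tanh (z : ℂ) : trDelta (exp (-z)) = 2 * tanh (z / 2) := by
  have hhalf : exp (-(z / 2)) = exp (z / 2) * exp (-z) := by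
    rw [← exp_add]; ring_nf
  have hsinh : sinh (z / 2) = exp (z / 2) * ((1 - exp (-z)) / 2) := by
    rw [sinh, hhalf]; ring
  have hcosh : cosh (z / 2) = exp (z / 2) * ((1 + exp (-z)) / 2) := by
    rw [cosh, hhalf]; ring
  rw [tanh_eq_sinh_div_cosh, hsinh, hcosh, mul_div_mul_left _ _ (exp_ne_zero _),
    div_div_div_cancel_right₀ two_ne_zero, trDelta, mul_div_assoc]

theorem pow_le_sSup_pow (x : ℝ) {m j : ℕ} (h1 : 1 ≤ j) (h2 : j ≤ m) :
    x ^ j ≤ sSup {y : ℝ | ∃ j : ℕ, 1 ≤ j ∧ j ≤ m ∧ y = x ^ j} := by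
  refine le_csSup ?_ ⟨j, h1, h2, rfl⟩
  refine ((Set.finite_Icc 1 m).image (x ^ ·)).bddAbove.mono ?_
  rintro y ⟨i, hi1, hi2, rfl⟩
  exact ⟨i, ⟨hi1, hi2⟩, rfl⟩

theorem norm_mul_half_pow_eq (c z : ℂ) (ℓ : ℕ) :
    ‖c * (z / 2) ^ (2 * ℓ)‖ = 4 * (‖c‖ / 2 ^ (2 * ℓ + 2) * ‖z‖ ^ (2 * ℓ)) := by
  rw [norm_mul, norm_pow, norm_div, Complex.norm_two, div_pow, pow_add]
  field_simp
  norm_num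

theorem norm_trDelta_exp_neg_sub_le (a : ℕ → ℂ)
    (ha : ∀ ω : ℂ, ‖ω‖ < Real.pi / 2 → ω ≠ 0 →
      (Complex.tanh ω - ω) / ω ^ 3 = ∑' ℓ : ℕ, a ℓ * ω ^ (2 * ℓ))
    {z : ℂ} (hz : ‖z‖ < Real.pi)
    (hs : Summable fun ℓ : ℕ => ‖a ℓ‖ / 2 ^ (2 * ℓ + 2) * ‖z‖ ^ (2 * ℓ)) :
    ‖trDelta (Complex.exp (-z)) - z‖
      ≤ (∑' ℓ : ℕ, ‖a ℓ‖ / 2 ^ (2 * ℓ + 2) * ‖z‖ ^ (2 * ℓ)) * ‖z‖ ^ 3 := by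
  rcases eq_or_ne z 0 with rfl | hz0
  · simp [trDelta]
  have hz2 : z / 2 ≠ 0 := div_ne_zero hz0 two_ne_zero
  have htanh := ha (z / 2) (by rw [norm_div, Complex.norm_two]; linarith) hz2
  rw [div_eq_iff (pow_ne_zero 3 hz2)] at htanh
  have hseries : ‖∑' ℓ : ℕ, a ℓ * (z / 2) ^ (2 * ℓ)‖
      ≤ 4 * ∑' ℓ : ℕ, ‖a ℓ‖ / 2 ^ (2 * ℓ + 2) * ‖z‖ ^ (2 * ℓ) := by
    simp_rw [← tsum_mul_left, ← norm_mul_half_pow_eq]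
    exact norm_tsum_le_tsum_norm
      ((hs.mul_left 4).congr fun ℓ => (norm_mul_half_pow_eq _ _ ℓ).symm)
  have hq : trDelta (Complex.exp (-z)) - z
      = 2 * ((∑' ℓ : ℕ, a ℓ * (z / 2) ^ (2 * ℓ)) * (z / 2) ^ 3) := by
    rw [trDelta_exp_neg_eq_two_mul_tanh, ← htanh]; ring
  calc ‖trDelta (Complex.exp (-z)) - z‖
      = ‖∑' ℓ : ℕ, a ℓ * (z / 2) ^ (2 * ℓ)‖ / 4 * ‖z‖ ^ 3 := by
        rw [hq, norm_mul, norm_mul, norm_pow, norm_div, Complex.norm_two]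
        ring
    _ ≤ _ := by gcongr; linarith

theorem sum_range_pow_sub_mul_choose (x : ℝ) (m : ℕ) :
    ∑ k ∈ Finset.range m, x ^ (m - k) * (m.choose k : ℝ) = (1 + x) ^ m - 1 := by
  rw [add_pow, Finset.sum_range_succ]
  simp

theorem norm_add_pow_sub_pow_le {R : Type*} [NormedCommRing R] [NormOneClass R]
    {z q : R} {d M : ℝ} (hq : ‖q‖ ≤ d * ‖z‖ ^ 3) (m : ℕ)
    (hM : ∀ j, 1 ≤ j → j ≤ m → d ^ j ≤ M) :
    ‖(z + q) ^ m - z ^ m‖ ≤ M * ((1 + ‖z‖ ^ 2) ^ m - 1) * ‖z‖ ^ m := by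
  have hterm : ∀ k ∈ Finset.range m, ‖z ^ k * q ^ (m - k) * (m.choose k : R)‖
      ≤ M * ‖z‖ ^ m * ((‖z‖ ^ 2) ^ (m - k) * (m.choose k : ℝ)) := by
    intro k hk
    have hkm : k < m := Finset.mem_range.mp hk
    have hqk : ‖q‖ ^ (m - k) ≤ M * ‖z‖ ^ (3 * (m - k)) :=
      calc ‖q‖ ^ (m - k) ≤ (d * ‖z‖ ^ 3) ^ (m - k) := by gcongr
        _ = d ^ (m - k) * ‖z‖ ^ (3 * (m - k)) := by rw [mul_pow, pow_mul]
        _ ≤ M * ‖z‖ ^ (3 * (m - k)) := by gcongr; exact hM _ (by omega) (by omega)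
    have hexp : k + 3 * (m - k) = m + 2 * (m - k) := by omega
    calc ‖z ^ k * q ^ (m - k) * (m.choose k : R)‖
        ≤ ‖z‖ ^ k * ‖q‖ ^ (m - k) * (m.choose k : ℝ) := by
          refine (norm_mul_le _ _).trans ?_
          gcongr
          · exact (norm_mul_le _ _).trans (by gcongr <;> exact norm_pow_le _ _)
          · simpa using Nat.norm_cast_le (α := R) (m.choose k)
      _ ≤ ‖z‖ ^ k * (M * ‖z‖ ^ (3 * (m - k))) * (m.choose k : ℝ) := by gcongr
      _ = M * ‖z‖ ^ m * ((‖z‖ ^ 2) ^ (m - k) * (m.choose k : ℝ)) := by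
          rw [← pow_mul]; linear_combination (M * (m.choose k : ℝ)) * congrArg (‖z‖ ^ ·) hexp
  calc ‖(z + q) ^ m - z ^ m‖
      = ‖∑ k ∈ Finset.range m, z ^ k * q ^ (m - k) * (m.choose k : R)‖ := by
        rw [add_pow, Finset.sum_range_succ, Nat.sub_self, pow_zero, Nat.choose_self,
          Nat.cast_one, mul_one, mul_one, add_sub_cancel_right]
    _ ≤ ∑ k ∈ Finset.range m, M * ‖z‖ ^ m * ((‖z‖ ^ 2) ^ (m - k) * (m.choose k : ℝ)) :=
        (norm_sum_le _ _).trans (Finset.sum_le_sum hterm)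
    _ = M * ((1 + ‖z‖ ^ 2) ^ m - 1) * ‖z‖ ^ m := by
        rw [← Finset.mul_sum, sum_range_pow_sub_mul_choose]; ring

theorem abs_delta_pow_sub_pow_le_general
    (a : ℕ → ℂ)
    (ha : ∀ ω : ℂ, ‖ω‖ < Real.pi / 2 → ω ≠ 0 →
      (Complex.tanh ω - ω) / ω ^ 3 = ∑' ℓ : ℕ, a ℓ * ω ^ (2 * ℓ))
    (hsum : ∀ σ : ℝ, 0 ≤ σ → σ < Real.pi →
      Summable fun ℓ : ℕ => ‖a ℓ‖ / 2 ^ (2 * ℓ + 2) * σ ^ (2 * ℓ))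
    (D : ℝ → ℝ)
    (hD : ∀ σ : ℝ, D σ = ∑' ℓ : ℕ, ‖a ℓ‖ / 2 ^ (2 * ℓ + 2) * σ ^ (2 * ℓ))
    (m : ℕ)
    (E : ℝ → ℝ)
    (hE : ∀ σ : ℝ, E σ =
      (sSup {x : ℝ | ∃ j : ℕ, 1 ≤ j ∧ j ≤ m ∧ x = D σ ^ j}) *
        (((1 + σ ^ 2) ^ m - 1) / σ ^ 2)) :
    ∀ z : ℂ, 0 < z.re → ‖z‖ < Real.pi →
      ‖trDelta (Complex.exp (-z)) ^ m - z ^ m‖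
        ≤ E (‖z‖) * ‖z‖ ^ (m + 2) := by
  intro z hre hz
  have hz0 : ‖z‖ ≠ 0 := norm_ne_zero_iff.mpr fun h => by simp [h] at hre
  have hq : ‖trDelta (Complex.exp (-z)) - z‖ ≤ D ‖z‖ * ‖z‖ ^ 3 :=
    hD ‖z‖ ▸ norm_trDelta_exp_neg_sub_le a ha hz (hsum _ (norm_nonneg z) hz)
  calc ‖trDelta (Complex.exp (-z)) ^ m - z ^ m‖
      = ‖(z + (trDelta (Complex.exp (-z)) - z)) ^ m - z ^ m‖ := by rw [add_sub_cancel]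
    _ ≤ _ := norm_add_pow_sub_pow_le hq m fun j h1 h2 => pow_le_sSup_pow _ h1 h2
    _ = E ‖z‖ * ‖z‖ ^ (m + 2) := by rw [hE]; field_simp; ring

theorem abs_delta_pow_sub_pow_le
    (a : ℕ → ℂ)
    (ha : ∀ ω : ℂ, ‖ω‖ < Real.pi / 2 → ω ≠ 0 →
      (Complex.tanh ω - ω) / ω ^ 3 = ∑' ℓ : ℕ, a ℓ * ω ^ (2 * ℓ))
    (hsum : ∀ σ : ℝ, 0 ≤ σ → σ < Real.pi →
      Summable fun ℓ : ℕ => ‖a ℓ‖ / 2 ^ (2 * ℓ + 2) * σ ^ (2 * ℓ))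
    (D : ℝ → ℝ)
    (hD : ∀ σ : ℝ, D σ = ∑' ℓ : ℕ, ‖a ℓ‖ / 2 ^ (2 * ℓ + 2) * σ ^ (2 * ℓ))
    (m : ℕ) (hm : 1 ≤ m)
    (E : ℝ → ℝ)
    (hE : ∀ σ : ℝ, E σ =
      (sSup {x : ℝ | ∃ j : ℕ, 1 ≤ j ∧ j ≤ m ∧ x = D σ ^ j}) *
        (((1 + σ ^ 2) ^ m - 1) / σ ^ 2)) :
    ∀ z : ℂ, 0 < z.re → ‖z‖ < Real.pi →
      ‖trDelta (Complex.exp (-z)) ^ m - z ^ m‖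
        ≤ E (‖z‖) * ‖z‖ ^ (m + 2) :=
  abs_delta_pow_sub_pow_le_general a ha hsum D hD m E hE
end

section
/- Let X, Y be Banach spaces and F : {Re s > 0} → B(X,Y) be analytic with ‖F(s)‖ ≤ C_F(Re s)·|s|^μ for all Re s > 0, where μ ≤ 0 and C_F is non-increasing on (0,∞). Then for all s with Re s > 0, ‖F'(s)‖ ≤ (2^{1−μ}/Re s)·C_F((Re s)/2)·|s|^μ. -/
/-!
Cauchy's estimate on the circle of radius `Re s / 2` about `s` bounds `‖F' s‖` by `2 / Re s` times
the maximum of `‖F‖` on that circle. The circle stays in the half-plane `Re z ≥ Re s / 2`, where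
`C_F (Re z) ≤ C_F (Re s / 2)` by monotonicity, and outside the disc `|z| < |s| / 2`, where
`|z| ^ μ ≤ (|s| / 2) ^ μ` because `μ ≤ 0`.
-/

open Metric

namespace Complex

theorem sub_le_re_of_mem_closedBall {s z : ℂ} {r : ℝ} (hz : z ∈ closedBall s r) :
    s.re - r ≤ z.re := by
  have h : |(z - s).re| ≤ r := (abs_re_le_norm _).trans (by rwa [← dist_eq_norm])
  rw [sub_re] at h
  linarith [neg_abs_le (z.re - s.re)]

theorem half_re_le_re_of_mem_closedBall {s z : ℂ} (hz : z ∈ closedBall s (s.re / 2)) :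
    s.re / 2 ≤ z.re := by
  linarith [sub_le_re_of_mem_closedBall hz]

theorem closedBall_half_re_subset {s : ℂ} (hs : 0 < s.re) :
    closedBall s (s.re / 2) ⊆ {z : ℂ | 0 < z.re} := fun _ hz =>
  (half_pos hs).trans_le (half_re_le_re_of_mem_closedBall hz)

theorem half_norm_le_norm_of_mem_closedBall {s z : ℂ} (hz : z ∈ closedBall s (s.re / 2)) :
    ‖s‖ / 2 ≤ ‖z‖ := by
  have hsz : ‖s - z‖ ≤ s.re / 2 := by rw [← dist_eq_norm]; exact mem_closedBall'.mp hz
  linarith [norm_sub_norm_le s z, re_le_norm s]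

theorem norm_le_of_mem_closedBall_half_re {E : Type*} [SeminormedAddCommGroup E] {f : ℂ → E}
    {μ : ℝ} (hμ : μ ≤ 0) {C : ℝ → ℝ} (hC : AntitoneOn C (Set.Ioi 0))
    (hbound : ∀ z : ℂ, 0 < z.re → ‖f z‖ ≤ C z.re * ‖z‖ ^ μ) {s z : ℂ} (hs : 0 < s.re)
    (hz : z ∈ closedBall s (s.re / 2)) :
    ‖f z‖ ≤ C (s.re / 2) * (‖s‖ / 2) ^ μ := by
  have hzre : 0 < z.re := closedBall_half_re_subset hs hz
  have hsz : ‖s‖ / 2 ≤ ‖z‖ := half_norm_le_norm_of_mem_closedBall hz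
  have hs0 : 0 < ‖s‖ / 2 := half_pos ((re_le_norm s).trans_lt' hs)
  have hCz : C z.re ≤ C (s.re / 2) :=
    hC (half_pos hs) hzre (half_re_le_re_of_mem_closedBall hz)
  have hCz_nonneg : 0 ≤ C z.re :=
    nonneg_of_mul_nonneg_left ((norm_nonneg _).trans (hbound z hzre))
      (Real.rpow_pos_of_pos (hs0.trans_le hsz) μ)
  calc ‖f z‖ ≤ C z.re * ‖z‖ ^ μ := hbound z hzre
    _ ≤ C (s.re / 2) * (‖s‖ / 2) ^ μ :=
      mul_le_mul hCz (Real.rpow_le_rpow_of_nonpos hs0 hsz hμ) (by positivity)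
        (hCz_nonneg.trans hCz)

end Complex

theorem deriv_bound_of_transfer_bound
    {X Y : Type*} [NormedAddCommGroup X] [NormedSpace ℂ X]
    [NormedAddCommGroup Y] [NormedSpace ℂ Y]
    (F : ℂ → X →L[ℂ] Y)
    (hF : DifferentiableOn ℂ F {s : ℂ | 0 < s.re})
    (μ : ℝ) (hμ : μ ≤ 0)
    (CF : ℝ → ℝ) (hCF : AntitoneOn CF (Set.Ioi (0 : ℝ)))
    (hbound : ∀ s : ℂ, 0 < s.re → ‖F s‖ ≤ CF s.re * ‖s‖ ^ μ) :
    ∀ s : ℂ, 0 < s.re →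
      ‖deriv F s‖ ≤ (2 ^ (1 - μ) / s.re) * CF (s.re / 2) * ‖s‖ ^ μ := by
  intro s hs
  have hdc : DiffContOnCl ℂ F (ball s (s.re / 2)) :=
    hF.diffContOnCl_ball (Complex.closedBall_half_re_subset hs)
  calc ‖deriv F s‖ ≤ CF (s.re / 2) * (‖s‖ / 2) ^ μ / (s.re / 2) :=
        Complex.norm_deriv_le_of_forall_mem_sphere_norm_le (half_pos hs) hdc fun z hz =>
          Complex.norm_le_of_mem_closedBall_half_re hμ hCF hbound hs (sphere_subset_closedBall hz)
    _ = (2 ^ (1 - μ) / s.re) * CF (s.re / 2) * ‖s‖ ^ μ := by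
      rw [Real.div_rpow (norm_nonneg s) zero_le_two, Real.rpow_sub zero_lt_two, Real.rpow_one]
      field_simp
end
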